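/- Every inner-distal homeomorphism of the circle S¹ is distal. -/

import Mathlib

open Metric Set MeasureTheory Filter Topology

/-- The proximal cell of `x` with respect to the iterates `f ^ n`, `n : ℤ`. -/
noncomputable def proximalCell {X : Type*} [MetricSpace X] (f : Equiv.Perm X) (x : X) : Set X :=
  {y | (⨅ n : ℤ, dist ((f ^ n) x) ((f ^ n) y)) = 0}

/-!
Let `y ≠ x` be proximal to `x`. The points `x` and `y` cut the circle into two open arcs, and
`fⁿ` maps them onto the two arcs cut by `fⁿ x` and `fⁿ y`; by connectedness one of them lands in
the short arc, whose points lie within `dist (fⁿ x) (fⁿ y)` of `fⁿ x`. As this distance gets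
arbitrarily small, one fixed arc is contracted towards the orbit of `x` at arbitrarily small
scales, so it lies in the proximal cell of `x`; being nonempty and open, it contradicts inner
distality.
-/

theorem forall_or_forall_of_forall_or {α : Type*} [LinearOrder α] {a : α} {P Q : α → Prop}
    (hP : Monotone P) (hQ : Monotone Q) (h : ∀ ε > a, P ε ∨ Q ε) :
    (∀ ε > a, P ε) ∨ (∀ ε > a, Q ε) := by
  by_contra! ⟨⟨ε₁, hε₁, hP₁⟩, ⟨ε₂, hε₂, hQ₂⟩⟩
  rcases h (min ε₁ ε₂) (lt_min hε₁ hε₂) with hPm | hQm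
  · exact hP₁ (hP (min_le_left _ _) hPm)
  · exact hQ₂ (hQ (min_le_right _ _) hQm)

theorem IsPreconnected.subset_or_subset_of_union_eq {X : Type*} [TopologicalSpace X]
    {U V P Q : Set X} (hU : IsOpen U) (hV : IsOpen V) (hUV : Disjoint U V) (hUne : U.Nonempty)
    (hP : IsPreconnected P) (hQ : IsPreconnected Q) (hPQ : P ∪ Q = U ∪ V) :
    P ⊆ U ∨ Q ⊆ U := by
  have hcover : P ∪ Q ⊆ U ∪ V := hPQ.le
  refine (hP.subset_or_subset hU hV hUV (subset_union_left.trans hcover)).imp_right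
    fun hPV => (hQ.subset_or_subset hU hV hUV (subset_union_right.trans hcover)).resolve_right
      fun hQV => ?_
  obtain ⟨z, hz⟩ := hUne
  exact hUV.notMem_of_mem_left hz (union_subset hPV hQV (hPQ ▸ Or.inl hz))

namespace Homeomorph

variable {X : Type*} [TopologicalSpace X]

theorem continuous_toEquiv_zpow (f : X ≃ₜ X) (n : ℤ) : Continuous ⇑(f.toEquiv ^ n) := by
  let toPerm : (X ≃ₜ X) →* Equiv.Perm X := ⟨⟨Homeomorph.toEquiv, rfl⟩, fun _ _ => rfl⟩
  rw [show f.toEquiv ^ n = (f ^ n).toEquiv from (map_zpow toPerm f n).symm]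
  exact (f ^ n).continuous

end Homeomorph

section Proximal

variable {X : Type*} [MetricSpace X] {f : Equiv.Perm X} {x y : X}

theorem mem_proximalCell_iff :
    y ∈ proximalCell f x ↔ ∀ ε > 0, ∃ n : ℤ, dist ((f ^ n) x) ((f ^ n) y) < ε := by
  have hbdd : BddBelow (range fun n : ℤ => dist ((f ^ n) x) ((f ^ n) y)) :=
    ⟨0, by rintro _ ⟨n, rfl⟩; exact dist_nonneg⟩
  refine ⟨fun h ε hε => exists_lt_of_ciInf_lt (h ▸ hε), fun h => ?_⟩
  refine le_antisymm (le_of_forall_pos_lt_add fun ε hε => ?_) (le_ciInf fun _ => dist_nonneg)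
  obtain ⟨n, hn⟩ := h ε hε
  exact (ciInf_le hbdd n).trans_lt (by rwa [zero_add])

theorem self_mem_proximalCell : x ∈ proximalCell f x := by
  simp [proximalCell]

theorem subset_proximalCell_of_forall_dist_le {C : Set X}
    (h : ∀ ε > 0, ∃ n : ℤ, ∀ u ∈ C, dist ((f ^ n) x) ((f ^ n) u) ≤ ε) :
    C ⊆ proximalCell f x := fun u hu =>
  mem_proximalCell_iff.2 fun ε hε =>
    let ⟨n, hn⟩ := h (ε / 2) (half_pos hε)
    ⟨n, (hn u hu).trans_lt (half_lt_self hε)⟩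

end Proximal

namespace AddCircle

variable {T : ℝ}

def openArc (c e : ℝ) : Set (AddCircle T) := (↑) '' Ioo c e

theorem isOpen_openArc (c e : ℝ) : IsOpen (openArc c e : Set (AddCircle T)) :=
  QuotientAddGroup.isOpenMap_coe _ isOpen_Ioo

theorem isPreconnected_openArc (c e : ℝ) : IsPreconnected (openArc c e : Set (AddCircle T)) :=
  isPreconnected_Ioo.image _ (AddCircle.continuous_mk' T).continuousOn

theorem openArc_nonempty {c e : ℝ} (hce : c < e) : (openArc c e : Set (AddCircle T)).Nonempty :=
  (nonempty_Ioo.2 hce).image _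

theorem injOn_coe_Ico [Fact (0 < T)] (c : ℝ) : InjOn ((↑) : ℝ → AddCircle T) (Ico c (c + T)) :=
  fun _ hu _ hv => (coe_eq_coe_iff_of_mem_Ico hu hv).1

theorem disjoint_openArc [Fact (0 < T)] {c e : ℝ} (hce : c ≤ e) (hec : e ≤ c + T) :
    Disjoint (openArc c e : Set (AddCircle T)) (openArc e (c + T)) :=
  Disjoint.image (disjoint_left.2 fun _ h₁ h₂ => lt_asymm h₁.2 h₂.1) (injOn_coe_Ico c)
    (Ioo_subset_Ico_self.trans (Ico_subset_Ico_right hec))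
    (Ioo_subset_Ico_self.trans (Ico_subset_Ico_left hce))

theorem compl_pair_eq_openArc_union [hT : Fact (0 < T)] {c e : ℝ} (hce : c < e)
    (hec : e < c + T) :
    ({(c : AddCircle T), ↑e} : Set (AddCircle T))ᶜ = openArc c e ∪ openArc e (c + T) := by
  have hsplit : Ico c (c + T) \ {c, e} = Ioo c e ∪ Ioo e (c + T) := by
    ext t
    simp only [Set.mem_sdiff, mem_Ico, mem_insert_iff, mem_singleton_iff, mem_union, mem_Ioo]
    constructor
    · rintro ⟨⟨h₁, h₂⟩, h₃⟩
      rcases lt_or_gt_of_ne (not_or.1 h₃).2 with h | h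
      · exact Or.inl ⟨lt_of_le_of_ne h₁ (Ne.symm (not_or.1 h₃).1), h⟩
      · exact Or.inr ⟨h, h₂⟩
    · rintro (⟨h₁, h₂⟩ | ⟨h₁, h₂⟩) <;> refine ⟨⟨by linarith, by linarith⟩, ?_⟩ <;>
        rintro (rfl | rfl) <;> linarith
  rw [openArc, openArc, ← image_union, ← hsplit, (injOn_coe_Ico c).image_sdiff_subset
    (by simp [insert_subset_iff, hce.le, hec, hT.out]), coe_image_Ico_eq, image_pair,
    compl_eq_univ_sdiff]

theorem dist_coe_le (u v : ℝ) : dist (u : AddCircle T) v ≤ |u - v| := by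
  rw [dist_eq_norm, ← coe_sub]
  exact QuotientAddGroup.norm_mk_le_norm

theorem exists_coe_pair_eq [hT : Fact (0 < T)] {p q : AddCircle T} (hpq : p ≠ q) :
    ∃ c e : ℝ, c < e ∧ e < c + T ∧ e - c = dist p q ∧
      ({(c : AddCircle T), ↑e} : Set _) = {p, q} := by
  suffices ∃ c e : ℝ, c < e ∧ e - c = dist p q ∧ ({(c : AddCircle T), ↑e} : Set _) = {p, q} by
    obtain ⟨c, e, hce, hlen, hpair⟩ := this
    have hhalf : dist p q ≤ T / 2 := by
      simpa [dist_eq_norm, abs_of_pos hT.out] using norm_le_half_period T hT.out.ne' (x := p - q)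
    exact ⟨c, e, hce, by linarith [hT.out], hlen, hpair⟩
  obtain ⟨c, rfl⟩ := QuotientAddGroup.mk_surjective p
  obtain ⟨s, hs⟩ := QuotientAddGroup.mk_surjective (q - (c : AddCircle T))
  set s' := s - round (T⁻¹ * s) * T
  have hcoe : (s' : AddCircle T) = s := by
    rw [coe_sub, sub_eq_self, ← zsmul_eq_mul, coe_zsmul, coe_period, smul_zero]
  have hs' : ((c + s' : ℝ) : AddCircle T) = q := by
    rw [coe_add, hcoe, hs, add_sub_cancel]
  have hdist : dist (c : AddCircle T) q = |s'| := by
    rw [dist_comm, dist_eq_norm, ← hs, norm_eq]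
  rcases lt_trichotomy s' 0 with hneg | hzero | hpos
  · refine ⟨c + s', c, by linarith, by rw [hdist, abs_of_neg hneg]; ring, ?_⟩
    rw [hs', pair_comm]
  · exact absurd (by simpa [hzero] using hs') hpq
  · exact ⟨c, c + s', by linarith, by rw [hdist, abs_of_pos hpos]; ring, by rw [hs']⟩

theorem forall_dist_le_or_forall_dist_le [Fact (0 < T)] {g : Equiv.Perm (AddCircle T)}
    (hg : Continuous g) {c e : ℝ} (hce : c < e) (hec : e < c + T) {x y : AddCircle T}
    (hxy : x ≠ y) (hpair : ({(c : AddCircle T), ↑e} : Set _) = {x, y}) :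
    (∀ u ∈ openArc c e, dist (g x) (g u) ≤ dist (g x) (g y)) ∨
      ∀ u ∈ openArc e (c + T), dist (g x) (g u) ≤ dist (g x) (g y) := by
  obtain ⟨c', e', hc'e', he'c', hlen, hpair'⟩ := exists_coe_pair_eq (g.injective.ne hxy)
  have hunion :
      g '' openArc c e ∪ g '' openArc e (c + T) = openArc c' e' ∪ openArc e' (c' + T) := by
    rw [← image_union, ← compl_pair_eq_openArc_union hce hec,
      ← compl_pair_eq_openArc_union hc'e' he'c', hpair, hpair', image_compl_eq g.bijective,
      image_pair]
  have hshort : ∀ v ∈ openArc c' e', dist (g x) v ≤ dist (g x) (g y) := by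
    rintro _ ⟨t, ht, rfl⟩
    have hgx : g x ∈ ({(c' : AddCircle T), ↑e'} : Set _) := hpair' ▸ mem_insert _ _
    rw [← hlen]
    rcases hgx with h | h <;> rw [h] <;> refine (dist_coe_le _ _).trans ?_ <;>
      rw [abs_le] <;> constructor <;> linarith [ht.1, ht.2]
  have harc (a b : ℝ) : IsPreconnected (g '' openArc a b) :=
    (isPreconnected_openArc a b).image _ hg.continuousOn
  refine (IsPreconnected.subset_or_subset_of_union_eq (isOpen_openArc _ _) (isOpen_openArc _ _)
    (disjoint_openArc hc'e'.le he'c'.le) (openArc_nonempty hc'e') (harc _ _) (harc _ _) hunion).imp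
    ?_ ?_ <;> exact fun h u hu => hshort _ (h (mem_image_of_mem g hu))

theorem openArc_subset_proximalCell_or [Fact (0 < T)] {f : AddCircle T ≃ₜ AddCircle T} {c e : ℝ}
    (hce : c < e) (hec : e < c + T) {x y : AddCircle T} (hxy : x ≠ y)
    (hpair : ({(c : AddCircle T), ↑e} : Set _) = {x, y}) (hy : y ∈ proximalCell f.toEquiv x) :
    openArc c e ⊆ proximalCell f.toEquiv x ∨ openArc e (c + T) ⊆ proximalCell f.toEquiv x := by
  have hmono (C : Set (AddCircle T)) : Monotone fun ε : ℝ =>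
      ∃ n : ℤ, ∀ u ∈ C, dist ((f.toEquiv ^ n) x) ((f.toEquiv ^ n) u) ≤ ε :=
    fun _ _ hεδ ⟨n, hn⟩ => ⟨n, fun u hu => (hn u hu).trans hεδ⟩
  refine (forall_or_forall_of_forall_or (hmono _) (hmono _) fun ε hε => ?_).imp
    subset_proximalCell_of_forall_dist_le subset_proximalCell_of_forall_dist_le
  obtain ⟨n, hn⟩ := mem_proximalCell_iff.1 hy ε hε
  exact (forall_dist_le_or_forall_dist_le (f.continuous_toEquiv_zpow n) hce hec hxy hpair).imp
    (fun h => ⟨n, fun u hu => (h u hu).trans hn.le⟩)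
    (fun h => ⟨n, fun u hu => (h u hu).trans hn.le⟩)

end AddCircle

/-- Every inner-distal homeomorphism of the circle is distal. -/
theorem stmt7 (f : AddCircle (1:ℝ) ≃ₜ AddCircle (1:ℝ))
    (hf : ∀ x : AddCircle (1:ℝ), interior (proximalCell f.toEquiv x) = ∅) :
    ∀ x : AddCircle (1:ℝ), proximalCell f.toEquiv x = {x} := by
  intro x
  refine Subset.antisymm (fun y hy => ?_) (singleton_subset_iff.2 self_mem_proximalCell)
  by_contra hyx
  have hxy : x ≠ y := Ne.symm hyx
  obtain ⟨c, e, hce, hec, -, hpair⟩ := AddCircle.exists_coe_pair_eq hxy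
  have hnot (C : Set (AddCircle (1:ℝ))) (hC : IsOpen C) (hne : C.Nonempty) :
      ¬C ⊆ proximalCell f.toEquiv x := fun hsub =>
    (hne.mono (interior_maximal hsub hC)).ne_empty (hf x)
  rcases AddCircle.openArc_subset_proximalCell_or hce hec hxy hpair hy with h | h
  · exact hnot _ (AddCircle.isOpen_openArc _ _) (AddCircle.openArc_nonempty hce) h
  · exact hnot _ (AddCircle.isOpen_openArc _ _) (AddCircle.openArc_nonempty hec) h
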